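/- Let X = (Xⁱ, ∂ⁱ) be a cochain complex in A = Fun(C, G) that is dg-cotorsion, i.e. every short exact sequence of complexes 0 → X → E → F → 0 with F a flat complex splits. Then for every i ∈ ℤ, the component Xⁱ is a cotorsion functor. -/

import Mathlib

/-!
Let `0 → Xⁱ → E → F → 0` be exact with `F` flat. The disk functor `Dⁱ` is exact, and maps into
a complex `X` from `Dⁱ(A)` correspond to maps `A → Xⁱ`. Pushing `Dⁱ(Xⁱ) → Dⁱ(E) → Dⁱ(F)` out along
the map `Dⁱ(Xⁱ) → X` given by the identity yields a short exact sequence of complexes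
`0 → X → Y → Dⁱ(F) → 0`. Since `Dⁱ(F)` is a flat complex, it splits when `X` is dg-cotorsion, and
the degree `i` part of a retraction `Y → X`, restricted to `E = Dⁱ(E)ⁱ`, retracts `Xⁱ → E`.
-/

set_option linter.unusedSectionVars false

open CategoryTheory CategoryTheory.Limits CategoryTheory.MonoidalCategory
  CategoryTheory.MonoidalClosed

universe v u

namespace FlatFunctorsPaper

variable {G : Type u} [Category.{v} G] [Abelian G] [MonoidalCategory G]
  [SymmetricCategory G] [MonoidalClosed G] [MonoidalPreadditive G]

/-- `X⁺ = [X, J]`, the internal hom into `J`. -/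
noncomputable def pObj (J X : G) : G := (ihom X).obj J

/-- The contravariant functorial action of `(-)⁺ = [-, J]`. -/
noncomputable def pMap (J : G) {X Y : G} (f : X ⟶ Y) : pObj J Y ⟶ pObj J X :=
  (MonoidalClosed.pre f).app J

@[simp] lemma pMap_id (J X : G) : pMap J (𝟙 X) = 𝟙 (pObj J X) := by
  simp [pMap, pObj]

@[simp] lemma pMap_comp (J : G) {X Y Z : G} (f : X ⟶ Y) (g : Y ⟶ Z) :
    pMap J (f ≫ g) = pMap J g ≫ pMap J f := by
  simp [pMap]; rfl

@[simp] lemma pMap_zero (J : G) (X Y : G) : pMap J (0 : X ⟶ Y) = 0 := by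
  apply MonoidalClosed.uncurry_injective
  unfold pObj
  rw [pMap, MonoidalClosed.uncurry_pre, MonoidalClosed.uncurry_eq]
  simp

/-- The canonical biduality morphism `X ⟶ X⁺⁺` in `G`. -/
noncomputable def bid (J X : G) : X ⟶ pObj J (pObj J X) :=
  MonoidalClosed.curry ((β_ (pObj J X) X).hom ≫ (ihom.ev X).app J)

lemma bid_natural (J : G) {X Y : G} (f : X ⟶ Y) :
    f ≫ bid J Y = bid J X ≫ pMap J (pMap J f) := by
  apply MonoidalClosed.uncurry_injective
  unfold bid pMap pObj
  rw [MonoidalClosed.uncurry_natural_left, MonoidalClosed.uncurry_natural_left]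
  rw [MonoidalClosed.uncurry_curry, MonoidalClosed.uncurry_pre]
  rw [whisker_exchange_assoc]
  rw [← MonoidalClosed.uncurry_eq, MonoidalClosed.uncurry_curry]
  simp

section Dual

variable {D : Type v} [SmallCategory D]

/-- The objectwise dual `F⁺` of a functor `F : D ⥤ G`, a functor `Dᵒᵖ ⥤ G`. -/
@[simps] noncomputable def dObj (J : G) (F : D ⥤ G) : Dᵒᵖ ⥤ G where
  obj c := pObj J (F.obj c.unop)
  map f := pMap J (F.map f.unop)
  map_id c := by simp
  map_comp f g := by simp

/-- The dual of a natural transformation. -/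
@[simps] noncomputable def dMap (J : G) {F F' : D ⥤ G} (η : F ⟶ F') :
    dObj J F' ⟶ dObj J F where
  app c := pMap J (η.app c.unop)
  naturality _ _ f := by
    show pMap J (F'.map f.unop) ≫ _ = _ ≫ pMap J (F.map f.unop)
    rw [← pMap_comp, ← pMap_comp, NatTrans.naturality]

@[simp] lemma dMap_id (J : G) (F : D ⥤ G) : dMap J (𝟙 F) = 𝟙 (dObj J F) := by
  ext c; simp; rfl

@[simp] lemma dMap_comp (J : G) {F F' F'' : D ⥤ G} (α : F ⟶ F') (β : F' ⟶ F'') :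
    dMap J (α ≫ β) = dMap J β ≫ dMap J α := by
  ext c; simp; rfl

@[simp] lemma dMap_zero (J : G) (F F' : D ⥤ G) : dMap J (0 : F ⟶ F') = 0 := by
  ext c; simp; rfl

/-- The double dual `F⁺⁺` of a functor `F : D ⥤ G`. -/
noncomputable def ddObj (J : G) (F : D ⥤ G) : D ⥤ G := opOp D ⋙ dObj J (dObj J F)

/-- The canonical natural transformation `φ_F : F ⟶ F⁺⁺`. -/
noncomputable def phi (J : G) (F : D ⥤ G) : F ⟶ ddObj J F where
  app c := bid J (F.obj c)
  naturality _ _ f := bid_natural J (F.map f)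

/-- The dual of a short exact sequence (short complex) of functors. -/
noncomputable def dSC (J : G) (S : ShortComplex (D ⥤ G)) : ShortComplex (Dᵒᵖ ⥤ G) :=
  ShortComplex.mk (dMap J S.g) (dMap J S.f) (by rw [← dMap_comp, S.zero, dMap_zero])

/-- A short exact sequence of functors is *pure* if its dual splits. -/
def IsPure (J : G) (S : ShortComplex (D ⥤ G)) : Prop := Nonempty ((dSC J S).Splitting)

/-- A functor `F` is *flat* if every short exact sequence ending in `F` is pure. -/
def IsFlat (J : G) (F : D ⥤ G) : Prop :=
  ∀ ⦃K E : D ⥤ G⦄ (i : K ⟶ E) (p : E ⟶ F) (w : i ≫ p = 0),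
    (ShortComplex.mk i p w).ShortExact → IsPure J (ShortComplex.mk i p w)

/-- A functor `X` is *cotorsion* if every short exact sequence `0 → X → E → F → 0`
with `F` flat splits. -/
def IsCotorsion (J : G) (X : D ⥤ G) : Prop :=
  ∀ ⦃E F : D ⥤ G⦄ (i : X ⟶ E) (p : E ⟶ F) (w : i ≫ p = 0),
    (ShortComplex.mk i p w).ShortExact → IsFlat J F →
      Nonempty (ShortComplex.mk i p w).Splitting

/-- A functor `P` is *pure injective* if every morphism into `P` extends along
pure monomorphisms. -/
def IsPureInjective (J : G) (P : D ⥤ G) : Prop :=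
  ∀ ⦃K E L : D ⥤ G⦄ (i : K ⟶ E) (p : E ⟶ L) (w : i ≫ p = 0),
    (ShortComplex.mk i p w).ShortExact → IsPure J (ShortComplex.mk i p w) →
      ∀ f : K ⟶ P, ∃ h : E ⟶ P, i ≫ h = f

end Dual

section ObjectLevel

/-- The dual of a short exact sequence (short complex) in `G`. -/
noncomputable def dSCG (J : G) (S : ShortComplex G) : ShortComplex G :=
  ShortComplex.mk (pMap J S.g) (pMap J S.f) (by rw [← pMap_comp, S.zero, pMap_zero])

/-- A short exact sequence in `G` is *pure* if its dual splits. -/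
def IsPureG (J : G) (S : ShortComplex G) : Prop := Nonempty ((dSCG J S).Splitting)

/-- An object `X` of `G` is *flat* if every short exact sequence ending in `X` is pure. -/
def IsFlatG (J X : G) : Prop :=
  ∀ ⦃K E : G⦄ (i : K ⟶ E) (p : E ⟶ X) (w : i ≫ p = 0),
    (ShortComplex.mk i p w).ShortExact → IsPureG J (ShortComplex.mk i p w)

/-- An object `X` of `G` is *cotorsion* if every short exact sequence
`0 → X → E → F → 0` with `F` flat splits. -/
def IsCotorsionG (J X : G) : Prop :=
  ∀ ⦃E F : G⦄ (i : X ⟶ E) (p : E ⟶ F) (w : i ≫ p = 0),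
    (ShortComplex.mk i p w).ShortExact → IsFlatG J F →
      Nonempty (ShortComplex.mk i p w).Splitting

/-- The flat objects and the cotorsion objects form a complete cotorsion theory in `G`:
every object has a special flat precover and a special cotorsion preenvelope. -/
def CompleteFlatCotorsionTheoryG (J : G) : Prop :=
  ∀ X : G,
    (∃ (Cx F : G) (i : Cx ⟶ F) (p : F ⟶ X) (w : i ≫ p = 0),
      (ShortComplex.mk i p w).ShortExact ∧ IsFlatG J F ∧ IsCotorsionG J Cx) ∧
    (∃ (Cx F : G) (i : X ⟶ Cx) (p : Cx ⟶ F) (w : i ≫ p = 0),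
      (ShortComplex.mk i p w).ShortExact ∧ IsCotorsionG J Cx ∧ IsFlatG J F)

end ObjectLevel

section Complexes

variable {D : Type v} [SmallCategory D]

/-- A *flat complex*: an acyclic complex of flat functors all of whose kernels of
differentials are flat (equivalently, a pure acyclic complex of flat functors). -/
def IsFlatComplex (J : G) (X : CochainComplex (D ⥤ G) ℤ) : Prop :=
  (∀ n, X.ExactAt n) ∧ (∀ n, IsFlat J (X.X n)) ∧
    ∀ n : ℤ, IsFlat J (kernel (X.d n (n + 1)))

/-- A *cotorsion complex*: an acyclic complex of cotorsion functors all of whose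
kernels of differentials are cotorsion. -/
def IsCotorsionComplex (J : G) (X : CochainComplex (D ⥤ G) ℤ) : Prop :=
  (∀ n, X.ExactAt n) ∧ (∀ n, IsCotorsion J (X.X n)) ∧
    ∀ n : ℤ, IsCotorsion J (kernel (X.d n (n + 1)))

/-- A complex is *dg-cotorsion* if every short exact sequence of complexes
`0 → X → E → F → 0` with `F` a flat complex splits. -/
def IsDgCotorsion (J : G) (X : CochainComplex (D ⥤ G) ℤ) : Prop :=
  ∀ ⦃E F : CochainComplex (D ⥤ G) ℤ⦄ (i : X ⟶ E) (p : E ⟶ F) (w : i ≫ p = 0),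
    (ShortComplex.mk i p w).ShortExact → IsFlatComplex J F →
      Nonempty (ShortComplex.mk i p w).Splitting

end Complexes

section Pushout

variable {𝒜 : Type*} [Category 𝒜] [Abelian 𝒜]

noncomputable abbrev pushoutShortComplex (S : ShortComplex 𝒜) {A : 𝒜} (φ : S.X₁ ⟶ A) :
    ShortComplex 𝒜 :=
  ShortComplex.mk (pushout.inl φ S.f) (pushout.desc 0 S.g (by rw [comp_zero, S.zero]))
    (pushout.inl_desc _ _ _)

lemma shortExact_pushoutShortComplex {S : ShortComplex 𝒜} (hS : S.ShortExact) {A : 𝒜}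
    (φ : S.X₁ ⟶ A) : (pushoutShortComplex S φ).ShortExact := by
  have := hS.mono_f
  have := hS.epi_g
  have : Epi (pushoutShortComplex S φ).g := epi_of_epi_fac (pushout.inr_desc _ _ _)
  refine ShortComplex.ShortExact.mk' (ShortComplex.exact_of_g_is_cokernel _
    (CokernelCofork.IsColimit.ofπ' _ _ fun {T} k hk => ?_)) inferInstance this
  -- `k` kills `A`, so `pushout.inr ≫ k` kills `S.X₁` and descends along the cokernel `S.g`.
  have hk' : S.f ≫ pushout.inr φ S.f ≫ k = 0 := by
    rw [← pushout.condition_assoc, hk, comp_zero]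
  refine ⟨hS.gIsCokernel.desc (CokernelCofork.ofπ _ hk'), pushout.hom_ext ?_ ?_⟩
  · rw [pushout.inl_desc_assoc, zero_comp]
    exact hk.symm
  · rw [pushout.inr_desc_assoc]
    exact Cofork.IsColimit.π_desc hS.gIsCokernel

end Pushout

section Disk

open HomologicalComplex

variable {𝒜 : Type*} [Category 𝒜] [Abelian 𝒜] (i : ℤ)

/-- The disk complex `Dⁱ(A)`: `A` in degrees `i` and `i + 1`, joined by the identity. -/
noncomputable abbrev disk (A : 𝒜) : CochainComplex 𝒜 ℤ :=
  double (𝟙 A) (i₀ := i) (i₁ := i + 1) rfl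

noncomputable abbrev diskXIso₀ (A : 𝒜) : (disk i A).X i ≅ A := doubleXIso₀ _ _

noncomputable abbrev diskXIso₁ (A : 𝒜) : (disk i A).X (i + 1) ≅ A :=
  doubleXIso₁ _ _ (lt_add_one i).ne

lemma isZero_disk_X (A : 𝒜) {n : ℤ} (h₀ : n ≠ i) (h₁ : n ≠ i + 1) : IsZero ((disk i A).X n) :=
  isZero_double_X _ _ _ h₀ h₁

lemma disk_d_self_add_one (A : 𝒜) :
    (disk i A).d i (i + 1) = (diskXIso₀ i A).hom ≫ (diskXIso₁ i A).inv := by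
  simpa using double_d (𝟙 A) _ (lt_add_one i).ne

lemma disk_d_add_one_eq_zero (A : 𝒜) (j : ℤ) : (disk i A).d (i + 1) j = 0 :=
  double_d_eq_zero₀ _ _ _ _ (lt_add_one i).ne'

lemma disk_d_to_self_eq_zero (A : 𝒜) (j : ℤ) : (disk i A).d j i = 0 :=
  double_d_eq_zero₁ _ _ _ _ (lt_add_one i).ne

noncomputable def diskMap {A B : 𝒜} (f : A ⟶ B) : disk i A ⟶ disk i B :=
  mkHomFromDouble _ (lt_add_one i).ne (f ≫ (diskXIso₀ i B).inv) (f ≫ (diskXIso₁ i B).inv)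
    (by simp [disk_d_self_add_one]) (fun _ _ => by rw [disk_d_add_one_eq_zero, comp_zero])

@[simp]
lemma diskMap_f₀ {A B : 𝒜} (f : A ⟶ B) :
    (diskMap i f).f i = (diskXIso₀ i A).hom ≫ f ≫ (diskXIso₀ i B).inv :=
  mkHomFromDouble_f₀ ..

@[simp]
lemma diskMap_f₁ {A B : 𝒜} (f : A ⟶ B) :
    (diskMap i f).f (i + 1) = (diskXIso₁ i A).hom ≫ f ≫ (diskXIso₁ i B).inv :=
  mkHomFromDouble_f₁ ..

lemma diskXIso₀_inv_comp_diskMap_f {A B : 𝒜} (f : A ⟶ B) :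
    (diskXIso₀ i A).inv ≫ (diskMap i f).f i = f ≫ (diskXIso₀ i B).inv := by
  simp

lemma diskXIso₁_inv_comp_diskMap_f {A B : 𝒜} (f : A ⟶ B) :
    (diskXIso₁ i A).inv ≫ (diskMap i f).f (i + 1) = f ≫ (diskXIso₁ i B).inv := by
  simp

lemma diskMap_comp {A B C : 𝒜} (f : A ⟶ B) (g : B ⟶ C) :
    diskMap i (f ≫ g) = diskMap i f ≫ diskMap i g := by
  ext <;> simp

lemma diskMap_zero (A B : 𝒜) : diskMap i (0 : A ⟶ B) = 0 := by
  ext <;> simp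

noncomputable abbrev diskShortComplex (S : ShortComplex 𝒜) : ShortComplex (CochainComplex 𝒜 ℤ) :=
  ShortComplex.mk (diskMap i S.f) (diskMap i S.g) (by rw [← diskMap_comp, S.zero, diskMap_zero])

lemma shortExact_diskShortComplex {S : ShortComplex 𝒜} (hS : S.ShortExact) :
    (diskShortComplex i S).ShortExact := by
  refine shortExact_of_degreewise_shortExact _ fun n => ?_
  by_cases h₀ : n = i
  · subst n
    exact ShortComplex.shortExact_of_iso (ShortComplex.isoMk (diskXIso₀ i _).symm
      (diskXIso₀ i _).symm (diskXIso₀ i _).symm (diskXIso₀_inv_comp_diskMap_f i S.f)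
      (diskXIso₀_inv_comp_diskMap_f i S.g)) hS
  by_cases h₁ : n = i + 1
  · subst n
    exact ShortComplex.shortExact_of_iso (ShortComplex.isoMk (diskXIso₁ i _).symm
      (diskXIso₁ i _).symm (diskXIso₁ i _).symm (diskXIso₁_inv_comp_diskMap_f i S.f)
      (diskXIso₁_inv_comp_diskMap_f i S.g)) hS
  exact { exact := ShortComplex.exact_of_isZero_X₂ _ (isZero_disk_X i _ h₀ h₁)
          mono_f := (isZero_disk_X i _ h₀ h₁).mono _
          epi_g := (isZero_disk_X i _ h₀ h₁).epi _ }

instance (A : 𝒜) : IsIso ((disk i A).d i (i + 1)) := by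
  rw [disk_d_self_add_one]
  infer_instance

lemma disk_exactAt (A : 𝒜) (n : ℤ) : (disk i A).ExactAt n := by
  by_cases h₀ : n = i
  · subst n
    rw [exactAt_iff' _ (i - 1) i (i + 1) (by simp) (by simp),
      ShortComplex.exact_iff_mono _ (disk_d_to_self_eq_zero i A _)]
    exact inferInstanceAs (Mono ((disk i A).d i (i + 1)))
  by_cases h₁ : n = i + 1
  · subst n
    rw [exactAt_iff' _ i (i + 1) (i + 1 + 1) (by simp) (by simp),
      ShortComplex.exact_iff_epi _ (disk_d_add_one_eq_zero i A _)]
    exact inferInstanceAs (Epi ((disk i A).d i (i + 1)))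
  exact ((disk i A).exactAt_iff n).mpr
    (ShortComplex.exact_of_isZero_X₂ _ (isZero_disk_X i A h₀ h₁))

lemma disk_X_isZero_or_iso (A : 𝒜) (n : ℤ) :
    IsZero ((disk i A).X n) ∨ Nonempty ((disk i A).X n ≅ A) := by
  by_cases h₀ : n = i
  · subst n
    exact .inr ⟨diskXIso₀ i A⟩
  by_cases h₁ : n = i + 1
  · subst n
    exact .inr ⟨diskXIso₁ i A⟩
  exact .inl (isZero_disk_X i A h₀ h₁)

lemma disk_kernel_isZero_or_iso (A : 𝒜) (n : ℤ) :
    IsZero (kernel ((disk i A).d n (n + 1))) ∨ Nonempty (kernel ((disk i A).d n (n + 1)) ≅ A) := by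
  by_cases h₁ : n = i + 1
  · subst n
    exact .inr ⟨kernelIsoOfEq (disk_d_add_one_eq_zero i A _) ≪≫ kernelZeroIsoSource ≪≫ diskXIso₁ i A⟩
  refine .inl ?_
  by_cases h₀ : n = i
  · subst n
    exact isZero_kernel_of_mono _
  exact (isZero_disk_X i A h₀ h₁).of_mono (kernel.ι _)

variable (X : CochainComplex 𝒜 ℤ)

noncomputable def diskDesc {A : 𝒜} (φ : A ⟶ X.X i) : disk i A ⟶ X :=
  mkHomFromDouble _ (lt_add_one i).ne φ (φ ≫ X.d i (i + 1)) (by simp) (fun _ _ => by simp)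

lemma diskDesc_f_self {A : 𝒜} (φ : A ⟶ X.X i) :
    (diskDesc i X φ).f i = (diskXIso₀ i A).hom ≫ φ :=
  mkHomFromDouble_f₀ ..

lemma exists_comp_eq_of_splitting {S : ShortComplex 𝒜} (φ : S.X₁ ⟶ X.X i)
    (σ : (pushoutShortComplex (diskShortComplex i S) (diskDesc i X φ)).Splitting) :
    ∃ ψ : S.X₂ ⟶ X.X i, S.f ≫ ψ = φ := by
  have hr : diskMap i S.f ≫ pushout.inr _ _ ≫ σ.r = diskDesc i X φ := by
    rw [← pushout.condition_assoc, show pushout.inl _ _ ≫ σ.r = 𝟙 X from σ.f_r,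
      Category.comp_id]
  refine ⟨(diskXIso₀ i S.X₂).inv ≫ (pushout.inr _ _ ≫ σ.r).f i, ?_⟩
  rw [← Category.assoc, ← diskXIso₀_inv_comp_diskMap_f, Category.assoc, ← comp_f, hr,
    diskDesc_f_self, Iso.inv_hom_id_assoc]

end Disk

section Flat

variable {D : Type v} [SmallCategory D] (J : G)

noncomputable def dIso {F F' : D ⥤ G} (e : F ≅ F') : dObj J F' ≅ dObj J F where
  hom := dMap J e.hom
  inv := dMap J e.inv
  hom_inv_id := by rw [← dMap_comp, e.inv_hom_id, dMap_id]
  inv_hom_id := by rw [← dMap_comp, e.hom_inv_id, dMap_id]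

lemma isZero_dObj {F : D ⥤ G} (hF : IsZero F) : IsZero (dObj J F) := by
  rw [IsZero.iff_id_eq_zero, ← dMap_id, hF.eq_of_src (𝟙 F) 0, dMap_zero]

lemma IsPure.of_iso {S₁ S₂ : ShortComplex (D ⥤ G)} (e : S₁ ≅ S₂) (h : IsPure J S₁) :
    IsPure J S₂ :=
  h.map fun σ => σ.ofIso <| ShortComplex.isoMk (dIso J (ShortComplex.π₃.mapIso e).symm)
    (dIso J (ShortComplex.π₂.mapIso e).symm) (dIso J (ShortComplex.π₁.mapIso e).symm)
    (by simpa [dSC, dIso, ← dMap_comp] using congrArg (dMap J) e.inv.comm₂₃.symm)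
    (by simpa [dSC, dIso, ← dMap_comp] using congrArg (dMap J) e.inv.comm₁₂.symm)

lemma isFlat_of_iso {F F' : D ⥤ G} (e : F' ≅ F) (h : IsFlat J F) : IsFlat J F' := by
  intro K E f g w hS
  let e' : ShortComplex.mk f (g ≫ e.hom) (by rw [reassoc_of% w, zero_comp]) ≅
      ShortComplex.mk f g w :=
    ShortComplex.isoMk (Iso.refl _) (Iso.refl _) e.symm (by simp) (by simp)
  exact (h f _ _ (ShortComplex.shortExact_of_iso e'.symm hS)).of_iso J e'

lemma isFlat_of_isZero {F : D ⥤ G} (hF : IsZero F) : IsFlat J F := by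
  intro K E f g w hS
  have := hS.mono_f
  have := hS.exact.epi_f (hF.eq_of_tgt g 0)
  have := isIso_of_mono_of_epi f
  exact ⟨ShortComplex.Splitting.ofIsZeroOfIsIso _ (isZero_dObj J hF)
    (inferInstanceAs (IsIso (dIso J (asIso f)).hom))⟩

lemma isFlat_of_isZero_or_iso {F F' : D ⥤ G} (h : IsFlat J F)
    (hF' : IsZero F' ∨ Nonempty (F' ≅ F)) : IsFlat J F' :=
  hF'.elim (isFlat_of_isZero J) fun ⟨e⟩ => isFlat_of_iso J e h

lemma isFlatComplex_disk (i : ℤ) {F : D ⥤ G} (hF : IsFlat J F) : IsFlatComplex J (disk i F) :=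
  ⟨disk_exactAt i F, fun n => isFlat_of_isZero_or_iso J hF (disk_X_isZero_or_iso i F n),
    fun n => isFlat_of_isZero_or_iso J hF (disk_kernel_isZero_or_iso i F n)⟩

end Flat

section Statement

variable {C : Type v} [SmallCategory C]
variable [HasLimits G] [HasColimits G] [AB5 G] [HasSeparator G]

theorem statement12_general (J : G)
    (X : CochainComplex (C ⥤ G) ℤ) (hX : IsDgCotorsion J X) :
    ∀ i : ℤ, IsCotorsion J (X.X i) := by
  intro i E F ι p w hS hF
  obtain ⟨σ⟩ := hX _ _ _
    (shortExact_pushoutShortComplex (shortExact_diskShortComplex i hS) (diskDesc i X (𝟙 _)))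
    (isFlatComplex_disk J i hF)
  obtain ⟨ρ, hρ⟩ := exists_comp_eq_of_splitting i X (S := ShortComplex.mk ι p w) (𝟙 _) σ
  exact ⟨ShortComplex.Splitting.ofExactOfRetraction _ hS.exact ρ hρ hS.epi_g⟩

/-- If `X` is a dg-cotorsion cochain complex in `A = Fun(C, G)`, then every component
`X.X i` is a cotorsion functor. -/
theorem statement12 (J : G) [Injective J] (hJ : IsCoseparator J)
    (hG : CompleteFlatCotorsionTheoryG J)
    (X : CochainComplex (C ⥤ G) ℤ) (hX : IsDgCotorsion J X) :
    ∀ i : ℤ, IsCotorsion J (X.X i) :=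
  statement12_general J X hX

end Statement

end FlatFunctorsPaper
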